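/- If M = max_x Tol(x, A, b) ≥ 0 is attained, and b̃ is the uniformly narrowed interval vector with components [lower(b_i) + M, upper(b_i) − M], then max_x Tol(x, A, b̃) = 0, and any maximizer x̂ of Tol(·, A, b) is also a maximizer of Tol(·, A, b̃); moreover A x̂ ∈ b̃ componentwise. -/
import Mathlib


/-- Recognizing functional Tol for a point matrix. -/
noncomputable def Tol {m n : ℕ} (A : Matrix (Fin m) (Fin n) ℝ)
    (lo hi : Fin m → ℝ) (x : Fin n → ℝ) : ℝ :=
  ⨅ i, ((hi i - lo i) / 2 - |(hi i + lo i) / 2 - A.mulVec x i|)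

lemma iInf_sub_const {ι : Type*} [Fintype ι] [Nonempty ι] (f : ι → ℝ) (c : ℝ) :
    ⨅ i, (f i - c) = (⨅ i, f i) - c := by
  have h1 : ∀ i, ⨅ j, (f j - c) ≤ f i - c := fun i =>
    ciInf_le (Set.Finite.bddBelow (Set.finite_range _)) i
  have h2 : ∀ i, ⨅ j, f j ≤ f i := fun i =>
    ciInf_le (Set.Finite.bddBelow (Set.finite_range _)) i
  apply le_antisymm
  · rw [le_sub_iff_add_le]
    apply le_ciInf
    intro i
    linarith [h1 i]
  · apply le_ciInf
    intro i
    linarith [h2 i]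

lemma Tol_narrow {m n : ℕ} (hm : 0 < m) (A : Matrix (Fin m) (Fin n) ℝ)
    (lo hi : Fin m → ℝ) (M : ℝ) (x : Fin n → ℝ) :
    Tol A (fun i => lo i + M) (fun i => hi i - M) x = Tol A lo hi x - M := by
  haveI : Nonempty (Fin m) := ⟨⟨0, hm⟩⟩
  unfold Tol
  have h : ∀ i : Fin m, ((hi i - M) - (lo i + M)) / 2 -
      |((hi i - M) + (lo i + M)) / 2 - A.mulVec x i| =
      ((hi i - lo i) / 2 - |(hi i + lo i) / 2 - A.mulVec x i|) - M := by
    intro i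
    have hmid : ((hi i - M) + (lo i + M)) / 2 = (hi i + lo i) / 2 := by ring
    rw [hmid]; ring
  simp_rw [h]
  exact iInf_sub_const _ M

/-- If `M = max Tol(·, A, b) ≥ 0` is attained at `x̂`, then for the uniformly
narrowed vector `b̃` with components `[lo i + M, hi i − M]`, the maximum of
`Tol(·, A, b̃)` equals 0 and is attained at `x̂`, and `A x̂ ∈ b̃` componentwise. -/
theorem stmt9 {m n : ℕ} (hm : 0 < m) (A : Matrix (Fin m) (Fin n) ℝ)
    (lo hi : Fin m → ℝ) (hlh : ∀ i, lo i ≤ hi i)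
    (xhat : Fin n → ℝ) (M : ℝ)
    (hM : M = Tol A lo hi xhat)
    (hmax : ∀ x, Tol A lo hi x ≤ Tol A lo hi xhat)
    (hM0 : 0 ≤ M) :
    Tol A (fun i => lo i + M) (fun i => hi i - M) xhat = 0 ∧
    (∀ x, Tol A (fun i => lo i + M) (fun i => hi i - M) x
        ≤ Tol A (fun i => lo i + M) (fun i => hi i - M) xhat) ∧
    (∀ i, lo i + M ≤ A.mulVec xhat i ∧ A.mulVec xhat i ≤ hi i - M) := by
  haveI : Nonempty (Fin m) := ⟨⟨0, hm⟩⟩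
  refine ⟨?_, ?_, ?_⟩
  · rw [Tol_narrow hm, ← hM]; ring
  · intro x
    rw [Tol_narrow hm, Tol_narrow hm]
    linarith [hmax x]
  · intro i
    have h1 : Tol A lo hi xhat ≤ (hi i - lo i) / 2 - |(hi i + lo i) / 2 - A.mulVec xhat i| :=
      ciInf_le (Set.Finite.bddBelow (Set.finite_range _)) i
    rw [← hM] at h1
    have h2 : |(hi i + lo i) / 2 - A.mulVec xhat i| ≤ (hi i - lo i) / 2 - M := by linarith
    rw [abs_le] at h2
    constructor <;> linarith [h2.1, h2.2]
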